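/- Let A be a residuated lattice with reticulation (L, λ). For a ∈ A: λ(a) is complemented in L if and only if a^n is complemented in A for some n ∈ ℕ*. -/
import Mathlib


/-- A (commutative, integral) residuated lattice: a bounded lattice whose top is the
monoid unit `1`, with a commutative monoid operation `*` (⊙) and residuum `himp`
satisfying the law of residuation. -/
class ResiduatedLattice (α : Type*) extends Lattice α, CommMonoid α, OrderBot α where
  himp : α → α → α
  le_one : ∀ a : α, a ≤ 1
  le_himp_iff : ∀ a b c : α, a ≤ himp b c ↔ a * b ≤ c

namespace ResiduatedLattice

variable {α : Type*} [ResiduatedLattice α]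

/-- A filter of a residuated lattice: nonempty, closed under ⊙, upward closed. -/
def IsRLFilter (F : Set α) : Prop :=
  F.Nonempty ∧ (∀ a ∈ F, ∀ b ∈ F, a * b ∈ F) ∧ ∀ a ∈ F, ∀ b : α, a ≤ b → b ∈ F

/-- The principal filter generated by `a`: the smallest filter containing `a`. -/
def princ (a : α) : Set α := ⋂₀ {F : Set α | IsRLFilter F ∧ a ∈ F}

/-- The co-annihilator of a set. -/
def coann (X : Set α) : Set α := {a : α | ∀ x ∈ X, a ⊔ x = 1}

/-- An element is complemented (belongs to the Boolean center). -/
def IsCompl' (a : α) : Prop := ∃ b : α, a ⊔ b = 1 ∧ a ⊓ b = ⊥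

end ResiduatedLattice

open ResiduatedLattice

section Reticulation

variable {α : Type*} [ResiduatedLattice α] {L : Type*} [DistribLattice L] [BoundedOrder L]

/-- Co-annihilator in a bounded (distributive) lattice. -/
def coannL (Y : Set L) : Set L := {x : L | ∀ y ∈ Y, x ⊔ y = ⊤}

/-- Complemented element of the bounded lattice `L`. -/
def IsComplL (f : L) : Prop := ∃ g : L, f ⊔ g = ⊤ ∧ f ⊓ g = ⊥

private lemma rl_mul_mono_right {a b c : α} (h : b ≤ c) : a * b ≤ a * c := by
  have hc : c ≤ ResiduatedLattice.himp a (a * c) :=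
    (ResiduatedLattice.le_himp_iff c a (a * c)).2 (by rw [mul_comm])
  have := (ResiduatedLattice.le_himp_iff b a (a * c)).1 (h.trans hc)
  rwa [mul_comm] at this

private lemma rl_mul_le_left (a b : α) : a * b ≤ a :=
  (rl_mul_mono_right (ResiduatedLattice.le_one b)).trans_eq (mul_one a)

private lemma rl_mul_le_right (a b : α) : a * b ≤ b := by
  rw [mul_comm]; exact rl_mul_le_left b a

private lemma rl_mul_mono_left {a b c : α} (h : a ≤ b) : a * c ≤ b * c := by
  rw [mul_comm a, mul_comm b]; exact rl_mul_mono_right h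

private lemma rl_mul_sup (a b c : α) : a * (b ⊔ c) = a * b ⊔ a * c := by
  refine le_antisymm ?_ (sup_le (rl_mul_mono_right le_sup_left)
    (rl_mul_mono_right le_sup_right))
  rw [mul_comm]
  refine (ResiduatedLattice.le_himp_iff (b ⊔ c) a (a * b ⊔ a * c)).1 (sup_le ?_ ?_)
  · exact (ResiduatedLattice.le_himp_iff b a _).2 (by rw [mul_comm]; exact le_sup_left)
  · exact (ResiduatedLattice.le_himp_iff c a _).2 (by rw [mul_comm]; exact le_sup_right)

private lemma rl_sup_pow_left {a b : α} (h : a ⊔ b = 1) (k : ℕ) : a ^ k ⊔ b = 1 := by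
  induction k with
  | zero => simpa using sup_eq_left.2 (ResiduatedLattice.le_one b)
  | succ k ih =>
    refine le_antisymm (ResiduatedLattice.le_one _) ?_
    calc (1 : α) = (a ^ k ⊔ b) * (a ⊔ b) := by rw [ih, h, one_mul]
    _ = (a ^ k * a ⊔ a ^ k * b) ⊔ (b * a ⊔ b * b) := by
        rw [mul_comm, rl_mul_sup, mul_comm (a ⊔ b) (a^k), mul_comm (a ⊔ b) b,
          rl_mul_sup, rl_mul_sup]
    _ ≤ a ^ (k + 1) ⊔ b := by
        refine sup_le (sup_le ?_ ?_) (sup_le ?_ ?_)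
        · exact le_sup_of_le_left (le_of_eq (pow_succ a k).symm)
        · exact le_sup_of_le_right (rl_mul_le_right _ _)
        · exact le_sup_of_le_right (rl_mul_le_left _ _)
        · exact le_sup_of_le_right (rl_mul_le_left _ _)

private lemma rl_sup_pow {a b : α} (h : a ⊔ b = 1) (k : ℕ) : a ^ k ⊔ b ^ k = 1 := by
  have h1 := rl_sup_pow_left h k
  rw [sup_comm] at h1
  have h2 := rl_sup_pow_left h1 k
  rwa [sup_comm] at h2

theorem reticulation_complemented_iff (l : α → L)
    (hsurj : Function.Surjective l)
    (hmul : ∀ a b : α, l (a * b) = l a ⊓ l b)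
    (hsup : ∀ a b : α, l (a ⊔ b) = l a ⊔ l b)
    (hbot : l ⊥ = ⊥) (hone : l 1 = ⊤)
    (hord : ∀ a b : α, l a ≤ l b ↔ ∃ n : ℕ, 0 < n ∧ a ^ n ≤ b) (a : α) :
    IsComplL (l a) ↔ ∃ n : ℕ, 0 < n ∧ IsCompl' (a ^ n) := by
  have hmono : ∀ x y : α, x ≤ y → l x ≤ l y := fun x y h =>
    (hord x y).2 ⟨1, one_pos, by simpa using h⟩
  have hpow : ∀ (x : α) (n : ℕ), 0 < n → l (x ^ n) = l x := by
    intro x n hn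
    induction n with
    | zero => exact absurd hn (lt_irrefl 0)
    | succ k ih =>
      rcases Nat.eq_zero_or_pos k with hk | hk
      · subst hk; simp
      · rw [pow_succ, hmul, ih hk, inf_idem]
  constructor
  · rintro ⟨g, hg1, hg2⟩
    obtain ⟨b, rfl⟩ := hsurj g
    -- a ⊔ b = 1
    have hsup1 : a ⊔ b = 1 := by
      have : l 1 ≤ l (a ⊔ b) := by rw [hsup, hg1, hone]
      obtain ⟨m, _, hm⟩ := (hord 1 (a ⊔ b)).1 this
      rw [one_pow] at hm
      exact le_antisymm (ResiduatedLattice.le_one _) hm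
    -- (a*b)^k = ⊥
    have : l (a * b) ≤ l ⊥ := by rw [hmul, hg2, hbot]
    obtain ⟨k, hk, hkle⟩ := (hord (a * b) ⊥).1 this
    have hmb : a ^ k * b ^ k = ⊥ := by
      rw [← mul_pow]; exact le_bot_iff.1 hkle
    refine ⟨k, hk, b ^ k, rl_sup_pow hsup1 k, ?_⟩
    have hx : a ^ k ⊓ b ^ k ≤ ⊥ := by
      calc a ^ k ⊓ b ^ k = (a ^ k ⊓ b ^ k) * (a ^ k ⊔ b ^ k) := by
            rw [rl_sup_pow hsup1 k, mul_one]
      _ = (a ^ k ⊓ b ^ k) * a ^ k ⊔ (a ^ k ⊓ b ^ k) * b ^ k := rl_mul_sup _ _ _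
      _ ≤ b ^ k * a ^ k ⊔ a ^ k * b ^ k := by
            exact sup_le_sup (rl_mul_mono_left inf_le_right) (rl_mul_mono_left inf_le_left)
      _ = ⊥ := by rw [mul_comm (b ^ k), hmb, sup_idem]
    exact le_antisymm hx bot_le
  · rintro ⟨n, hn, b, h1, h2⟩
    refine ⟨l b, ?_, ?_⟩
    · rw [← hpow a n hn, ← hsup, h1, hone]
    · refine le_antisymm ?_ bot_le
      rw [← hpow a n hn, ← hmul, ← hbot]
      refine hmono _ _ ?_
      calc a ^ n * b ≤ a ^ n ⊓ b := le_inf (rl_mul_le_left _ _) (rl_mul_le_right _ _)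
      _ = ⊥ := h2

end Reticulation
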